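/- Let ℓ ≥ 1, let G_1, …, G_ℓ be finite simple undirected graphs, each with two distinct designated vertices s_i, t_i ∈ V(G_i), and let G* be the graph obtained from the disjoint union of G_1, …, G_ℓ by identifying t_i with s_{i+1} for each i = 1, …, ℓ−1. Let p ≥ 1 and k ≥ 0 be integers and suppose that for every i the graph G_i admits a (p, s_i, t_i)-routing with at most k+1 shared edges. Then G* admits a (p, s_1, t_ℓ)-routing with at most ℓ·(k+1)−1 shared edges if and only if there exists an index i such that G_i admits a (p, s_i, t_i)-routing with at most k shared edges. -/

import Mathlib

/-- The set of edges shared by at least two paths of the routing `P`. -/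
def mseSharedEdges {V : Type*} {G : SimpleGraph V} {s t : V} {p : ℕ}
    (P : Fin p → G.Walk s t) : Set (Sym2 V) :=
  {e | ∃ i j : Fin p, i ≠ j ∧ e ∈ (P i).edges ∧ e ∈ (P j).edges}

/-- Vertex type of the chain-gluing of the graphs `G i` (on vertex types `V i`, with
designated vertices `s i`, `t i`): the disjoint union of the `V i`, where for `i ≠ 0`
the vertex `s i` is removed (it is identified with `t (i-1)`, which represents the
glued vertex). -/
def MseGlueV {ℓ : ℕ} (V : Fin ℓ → Type) (s : ∀ i, V i) : Type :=
  {x : Σ i : Fin ℓ, V i // x.2 = s x.1 → x.1.1 = 0}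

open Classical in
/-- The canonical map from `V i` into the glued vertex type: `s i` (for `i ≠ 0`) is sent
to the glued vertex represented by `t (i-1)`; all other vertices are sent to themselves. -/
noncomputable def mseGlueEmb {ℓ : ℕ} {V : Fin ℓ → Type} (s t : ∀ i, V i)
    (hst : ∀ i, s i ≠ t i) (i : Fin ℓ) (v : V i) : MseGlueV V s :=
  if h : v = s i ∧ i.1 ≠ 0 then
    ⟨⟨⟨i.1 - 1, Nat.lt_of_le_of_lt (Nat.sub_le _ _) i.isLt⟩,
       t ⟨i.1 - 1, Nat.lt_of_le_of_lt (Nat.sub_le _ _) i.isLt⟩⟩,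
     fun hts => absurd hts.symm (hst _)⟩
  else
    ⟨⟨i, v⟩, fun hv => Classical.byContradiction fun h0 => h ⟨hv, h0⟩⟩

/-- The chain-gluing of the graphs `G i`: the edges are exactly the images of the edges
of the `G i` under the canonical maps. -/
noncomputable def mseGlueGraph {ℓ : ℕ} {V : Fin ℓ → Type} (Gs : ∀ i, SimpleGraph (V i))
    (s t : ∀ i, V i) (hst : ∀ i, s i ≠ t i) : SimpleGraph (MseGlueV V s) :=
  SimpleGraph.fromRel (fun x y =>
    ∃ (i : Fin ℓ) (a b : V i), (Gs i).Adj a b ∧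
      x = mseGlueEmb s t hst i a ∧ y = mseGlueEmb s t hst i b)

/-- The source `v_0 = s 0` of the glued graph. -/
noncomputable def mseGlueSrc {ℓ : ℕ} (hl : 1 ≤ ℓ) {V : Fin ℓ → Type} (s t : ∀ i, V i)
    (hst : ∀ i, s i ≠ t i) : MseGlueV V s :=
  mseGlueEmb s t hst ⟨0, hl⟩ (s ⟨0, hl⟩)

/-- The sink `v_ℓ = t (ℓ-1)` of the glued graph. -/
noncomputable def mseGlueSnk {ℓ : ℕ} (hl : 1 ≤ ℓ) {V : Fin ℓ → Type} (s t : ∀ i, V i)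
    (hst : ∀ i, s i ≠ t i) : MseGlueV V s :=
  mseGlueEmb s t hst ⟨ℓ - 1, Nat.sub_lt hl Nat.one_pos⟩ (t ⟨ℓ - 1, Nat.sub_lt hl Nat.one_pos⟩)

/-!
An edge of the glued graph `G*` lies in exactly one block `G i`, since distinct blocks meet in
at most one vertex. Concatenating routings of the blocks therefore gives a routing of `G*` whose
shared edges are the union of the blocks' shared edges, at most `k + (ℓ - 1)(k + 1) = ℓ(k + 1) - 1`
of them when one block has at most `k`. Conversely, the retraction of `G*` onto `G i` that
collapses the earlier blocks to `s i` and the later ones to `t i` turns a routing of `G*` into a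
routing of `G i` whose shared edges all come from shared edges of `G*` inside block `i`. These
sets are disjoint for different `i`, so a routing of `G*` with fewer than `ℓ(k + 1)` shared edges
has fewer than `k + 1` of them in some block.
-/
open SimpleGraph

section SharedEdges

variable {V : Type*} {G : SimpleGraph V} {p : ℕ}

theorem mseSharedEdges_finite {s t : V} (P : Fin p → G.Walk s t) :
    (mseSharedEdges P).Finite :=
  (Set.finite_iUnion fun i => (P i).edges.finite_toSet).subset
    fun _ ⟨i, _, _, hi, _⟩ => Set.mem_iUnion.2 ⟨i, hi⟩

theorem mseSharedEdges_mono {s t s' t' : V} {P : Fin p → G.Walk s t}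
    {Q : Fin p → G.Walk s' t'} (h : ∀ j, (P j).edges ⊆ (Q j).edges) :
    mseSharedEdges P ⊆ mseSharedEdges Q :=
  fun _ ⟨i, j, hij, hi, hj⟩ => ⟨i, j, hij, h i hi, h j hj⟩

end SharedEdges

namespace SimpleGraph.Walk

variable {V W : Type*} {G : SimpleGraph V} {H : SimpleGraph W} (f : V → W)
  (hf : ∀ ⦃x y⦄, G.Adj x y → f x = f y ∨ H.Adj (f x) (f y))

open Classical in
noncomputable def mapCollapse : ∀ {u v : V}, G.Walk u v → H.Walk (f u) (f v)
  | _, _, nil => nil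
  | _, _, cons h q =>
    if hxy : f _ = f _ then (mapCollapse q).copy hxy.symm rfl
    else cons ((hf h).resolve_left hxy) (mapCollapse q)

theorem edges_mapCollapse_subset {u v : V} (q : G.Walk u v) :
    (q.mapCollapse f hf).edges ⊆ q.edges.map (Sym2.map f) := by
  induction q with
  | nil => simp [mapCollapse]
  | cons h q ih =>
    rw [mapCollapse]
    split_ifs
    · simpa using List.subset_cons_of_subset _ ih
    · simpa using List.cons_subset_cons _ ih

end SimpleGraph.Walk

section Glue

variable {ℓ : ℕ} {V : Fin ℓ → Type}

noncomputable def mseGlueProj (s t : ∀ i, V i) (i : Fin ℓ) (x : MseGlueV V s) : V i :=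
  match x.1 with
  | ⟨j, v⟩ => if h : j = i then h ▸ v else if j < i then s i else t i

variable {s t : ∀ i, V i} {hst : ∀ i, s i ≠ t i}

theorem mseGlueEmb_source_eq {i j : Fin ℓ} (h : j.1 + 1 = i.1) :
    mseGlueEmb s t hst i (s i) = mseGlueEmb s t hst j (t j) := by
  have hj : j = ⟨i.1 - 1, Nat.lt_of_le_of_lt (Nat.sub_le _ _) i.isLt⟩ := Fin.ext (Nat.eq_sub_of_add_eq h)
  subst hj
  erw [mseGlueEmb, mseGlueEmb, dif_pos ⟨rfl, by omega⟩, dif_neg fun h => hst _ h.1.symm]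

theorem mseGlueEmb_fst {j : Fin ℓ} {v : V j} (h : ¬(v = s j ∧ j.1 ≠ 0)) :
    (mseGlueEmb s t hst j v).1 = ⟨j, v⟩ := by
  erw [mseGlueEmb, dif_neg h]

theorem mseGlueProj_of_fst_eq {i j : Fin ℓ} {v : V j} {x : MseGlueV V s} (hx : x.1 = ⟨j, v⟩) :
    mseGlueProj s t i x = if h : j = i then h ▸ v else if j < i then s i else t i := by
  unfold mseGlueProj
  rw [hx]

theorem mseGlueEmb_cases (j : Fin ℓ) (v : V j) :
    (mseGlueEmb s t hst j v).1 = ⟨j, v⟩ ∨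
      ∃ j' : Fin ℓ, j'.1 + 1 = j.1 ∧ v = s j ∧ (mseGlueEmb s t hst j v).1 = ⟨j', t j'⟩ := by
  by_cases hv : v = s j ∧ j.1 ≠ 0
  · obtain ⟨rfl, hj⟩ := hv
    have hj' : (⟨j.1 - 1, by omega⟩ : Fin ℓ).1 + 1 = j.1 :=
      Nat.sub_add_cancel (Nat.one_le_iff_ne_zero.2 hj)
    refine .inr ⟨_, hj', rfl, ?_⟩
    rw [mseGlueEmb_source_eq hj', mseGlueEmb_fst fun h => hst _ h.1.symm]
  · exact .inl (mseGlueEmb_fst hv)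

theorem mseGlueProj_emb_self (i : Fin ℓ) (v : V i) :
    mseGlueProj s t i (mseGlueEmb s t hst i v) = v := by
  rcases mseGlueEmb_cases (hst := hst) i v with h | ⟨j, hj, rfl, h⟩
  · rw [mseGlueProj_of_fst_eq h, dif_pos rfl]
  · have hji : j < i := Fin.lt_def.2 (by omega)
    rw [mseGlueProj_of_fst_eq h, dif_neg hji.ne, if_pos hji]

theorem mseGlueProj_emb_of_ne {i j : Fin ℓ} (hji : j ≠ i) (v : V j) :
    mseGlueProj s t i (mseGlueEmb s t hst j v) = if j < i then s i else t i := by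
  rcases mseGlueEmb_cases (hst := hst) j v with h | ⟨j', hj', rfl, h⟩
  · rw [mseGlueProj_of_fst_eq h, dif_neg hji]
  · rw [mseGlueProj_of_fst_eq h]
    rcases lt_trichotomy j' i with hlt | rfl | hgt
    · have : j < i := Fin.lt_def.2 (by have := Fin.lt_def.1 hlt; omega)
      rw [dif_neg hlt.ne, if_pos hlt, if_pos this]
    · have : ¬ j < j' := by rw [Fin.lt_def]; omega
      rw [dif_pos rfl, if_neg this]
    · have : ¬ j < i := by rw [Fin.lt_def]; have := Fin.lt_def.1 hgt; omega
      rw [dif_neg hgt.ne', if_neg (not_lt.2 hgt.le), if_neg this]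

theorem mseGlueEmb_injective (i : Fin ℓ) : Function.Injective (mseGlueEmb s t hst i) :=
  Function.LeftInverse.injective (g := mseGlueProj s t i) (mseGlueProj_emb_self i)

/-- Distinct blocks meet in at most one vertex, so they share no edge. -/
theorem eq_of_sym2_map_mseGlueEmb_eq {i j : Fin ℓ} {f : Sym2 (V i)} {g : Sym2 (V j)}
    (hf : ¬f.IsDiag) (h : Sym2.map (mseGlueEmb s t hst i) f = Sym2.map (mseGlueEmb s t hst j) g) :
    i = j := by
  by_contra hij
  have hconst : ∀ a ∈ f, a = if j < i then s i else t i := by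
    intro a ha
    obtain ⟨b, -, hb⟩ := Sym2.mem_map.1 (h ▸ Sym2.mem_map.2 ⟨a, ha, rfl⟩)
    rw [← mseGlueProj_emb_self (hst := hst) i a, ← hb, mseGlueProj_emb_of_ne (Ne.symm hij)]
  induction f using Sym2.ind with
  | _ a b => exact hf (Sym2.mk_isDiag_iff.2 ((hconst a (Sym2.mem_mk_left a b)).trans
      (hconst b (Sym2.mem_mk_right a b)).symm))

variable {Gs : ∀ i, SimpleGraph (V i)}

theorem mseGlueGraph_adj_iff {x y : MseGlueV V s} :
    (mseGlueGraph Gs s t hst).Adj x y ↔ x ≠ y ∧ ∃ (i : Fin ℓ) (a b : V i),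
      (Gs i).Adj a b ∧ x = mseGlueEmb s t hst i a ∧ y = mseGlueEmb s t hst i b := by
  rw [mseGlueGraph, SimpleGraph.fromRel_adj]
  constructor
  · rintro ⟨hne, ⟨i, a, b, hab, hx, hy⟩ | ⟨i, a, b, hab, hy, hx⟩⟩
    exacts [⟨hne, i, a, b, hab, hx, hy⟩, ⟨hne, i, b, a, hab.symm, hx, hy⟩]
  · rintro ⟨hne, h⟩
    exact ⟨hne, .inl h⟩

noncomputable def mseGlueHom (Gs : ∀ i, SimpleGraph (V i)) (s t : ∀ i, V i)
    (hst : ∀ i, s i ≠ t i) (i : Fin ℓ) : Gs i →g mseGlueGraph Gs s t hst where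
  toFun := mseGlueEmb s t hst i
  map_rel' {a b} hab := mseGlueGraph_adj_iff.2
    ⟨(mseGlueEmb_injective i).ne hab.ne, i, a, b, hab, rfl, rfl⟩

theorem mseGlueHom_apply (i : Fin ℓ) (v : V i) :
    mseGlueHom Gs s t hst i v = mseGlueEmb s t hst i v :=
  rfl

theorem mseGlueProj_src (hl : 1 ≤ ℓ) (i : Fin ℓ) :
    mseGlueProj s t i (mseGlueSrc hl s t hst) = s i := by
  rcases eq_or_ne ⟨0, hl⟩ i with rfl | h0
  · exact mseGlueProj_emb_self _ _
  · rw [mseGlueSrc, mseGlueProj_emb_of_ne h0,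
      if_pos (Fin.lt_def.2 (Nat.pos_of_ne_zero fun h => h0 (Fin.ext h.symm)))]

theorem mseGlueProj_snk (hl : 1 ≤ ℓ) (i : Fin ℓ) :
    mseGlueProj s t i (mseGlueSnk hl s t hst) = t i := by
  rcases eq_or_ne ⟨ℓ - 1, Nat.sub_lt hl Nat.one_pos⟩ i with rfl | h0
  · exact mseGlueProj_emb_self _ _
  · rw [mseGlueSnk, mseGlueProj_emb_of_ne h0,
      if_neg (not_lt.2 (Fin.le_def.2 (Nat.le_sub_one_of_lt i.isLt)))]

theorem mseGlueProj_adj (i : Fin ℓ) {x y : MseGlueV V s}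
    (hxy : (mseGlueGraph Gs s t hst).Adj x y) :
    mseGlueProj s t i x = mseGlueProj s t i y ∨
      (Gs i).Adj (mseGlueProj s t i x) (mseGlueProj s t i y) ∧
        mseGlueEmb s t hst i (mseGlueProj s t i x) = x ∧
        mseGlueEmb s t hst i (mseGlueProj s t i y) = y := by
  obtain ⟨-, j, a, b, hab, rfl, rfl⟩ := mseGlueGraph_adj_iff.1 hxy
  rcases eq_or_ne j i with rfl | hji
  · rw [mseGlueProj_emb_self, mseGlueProj_emb_self]
    exact .inr ⟨hab, rfl, rfl⟩
  · simp only [mseGlueProj_emb_of_ne hji, true_or]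

theorem mseGlueProj_eq_or_adj (i : Fin ℓ) ⦃x y : MseGlueV V s⦄
    (hxy : (mseGlueGraph Gs s t hst).Adj x y) :
    mseGlueProj s t i x = mseGlueProj s t i y ∨
      (Gs i).Adj (mseGlueProj s t i x) (mseGlueProj s t i y) :=
  (mseGlueProj_adj i hxy).imp_right (·.1)

end Glue

section GlueRouting

variable {ℓ : ℕ} {V : Fin ℓ → Type} {Gs : ∀ i, SimpleGraph (V i)} {s t : ∀ i, V i}
  {hst : ∀ i, s i ≠ t i} {p : ℕ}

theorem mseGlue_exists_walk (hl : 1 ≤ ℓ) (W : ∀ i, (Gs i).Walk (s i) (t i)) :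
    ∃ Q : (mseGlueGraph Gs s t hst).Walk (mseGlueSrc hl s t hst) (mseGlueSnk hl s t hst),
      ∀ e ∈ Q.edges, ∃ i, ∃ f ∈ (W i).edges, Sym2.map (mseGlueEmb s t hst i) f = e := by
  suffices h : ∀ n (hn : n < ℓ), ∃ Q : (mseGlueGraph Gs s t hst).Walk (mseGlueSrc hl s t hst)
      (mseGlueEmb s t hst ⟨n, hn⟩ (t ⟨n, hn⟩)),
      ∀ e ∈ Q.edges, ∃ i, ∃ f ∈ (W i).edges, Sym2.map (mseGlueEmb s t hst i) f = e from
    h _ _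
  have hblock i : ∀ e ∈ ((W i).map (mseGlueHom Gs s t hst i)).edges,
      ∃ i, ∃ f ∈ (W i).edges, Sym2.map (mseGlueEmb s t hst i) f = e := fun e he => by
    rw [Walk.edges_map, List.mem_map] at he
    exact ⟨i, he⟩
  intro n hn
  induction n with
  | zero => exact ⟨(W _).map (mseGlueHom Gs s t hst _), hblock _⟩
  | succ n ih =>
    obtain ⟨Q, hQ⟩ := ih (by omega)
    refine ⟨Q.append (((W _).map (mseGlueHom Gs s t hst _)).copy
      ((mseGlueHom_apply _ _).trans (mseGlueEmb_source_eq (j := ⟨n, by omega⟩) rfl))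
      (mseGlueHom_apply _ _)), ?_⟩
    rintro e he
    rw [Walk.edges_append, List.mem_append, Walk.edges_copy] at he
    exact he.elim (hQ e) (hblock _ e)

theorem mseGlue_exists_routing_ncard_le_sum (hl : 1 ≤ ℓ)
    (P : ∀ i, Fin p → (Gs i).Walk (s i) (t i)) :
    ∃ Q : Fin p →
        (mseGlueGraph Gs s t hst).Walk (mseGlueSrc hl s t hst) (mseGlueSnk hl s t hst),
      (∀ j, (Q j).IsPath) ∧ (mseSharedEdges Q).ncard ≤ ∑ i, (mseSharedEdges (P i)).ncard := by
  classical
  choose W hW using fun j => mseGlue_exists_walk (hst := hst) hl fun i => P i j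
  have hshared :
      mseSharedEdges W ⊆ ⋃ i, Sym2.map (mseGlueEmb s t hst i) '' mseSharedEdges (P i) := by
    rintro e ⟨a, b, hab, hea, heb⟩
    obtain ⟨i, f, hf, rfl⟩ := hW a e hea
    obtain ⟨i', f', hf', he⟩ := hW b _ heb
    obtain rfl := eq_of_sym2_map_mseGlueEmb_eq
      ((Gs i).not_isDiag_of_mem_edgeSet (Walk.edges_subset_edgeSet _ hf)) he.symm
    obtain rfl := Sym2.map.injective (mseGlueEmb_injective _) he
    exact Set.mem_iUnion.2 ⟨_, _, ⟨a, b, hab, hf, hf'⟩, rfl⟩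
  have hfin : (⋃ i, Sym2.map (mseGlueEmb s t hst i) '' mseSharedEdges (P i)).Finite :=
    Set.finite_iUnion fun i => (mseSharedEdges_finite _).image _
  refine ⟨fun j => (W j).bypass, fun j => Walk.bypass_isPath _, ?_⟩
  calc (mseSharedEdges fun j => (W j).bypass).ncard
      ≤ (⋃ i, Sym2.map (mseGlueEmb s t hst i) '' mseSharedEdges (P i)).ncard :=
        Set.ncard_le_ncard ((mseSharedEdges_mono fun j => Walk.edges_bypass_subset_edges _).trans
          hshared) hfin
    _ ≤ ∑ i, (Sym2.map (mseGlueEmb s t hst i) '' mseSharedEdges (P i)).ncard :=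
        Set.ncard_iUnion_le_of_fintype _
    _ = ∑ i, (mseSharedEdges (P i)).ncard := by
        simp only [Set.ncard_image_of_injective _ (Sym2.map.injective (mseGlueEmb_injective _))]

end GlueRouting

section GlueTrace

variable {ℓ : ℕ} {V : Fin ℓ → Type}

def mseGlueTrace (s t : ∀ i, V i) (hst : ∀ i, s i ≠ t i) (S : Set (Sym2 (MseGlueV V s)))
    (i : Fin ℓ) : Set (Sym2 (V i)) :=
  {f | ¬f.IsDiag ∧ Sym2.map (mseGlueEmb s t hst i) f ∈ S}

variable {Gs : ∀ i, SimpleGraph (V i)} {s t : ∀ i, V i} {hst : ∀ i, s i ≠ t i}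
  {S : Set (Sym2 (MseGlueV V s))}

theorem mseGlueTrace_finite (hS : S.Finite) (i : Fin ℓ) : (mseGlueTrace s t hst S i).Finite :=
  (hS.preimage (Sym2.map.injective (mseGlueEmb_injective i)).injOn).subset fun _ hf => hf.2

theorem sum_ncard_mseGlueTrace_le (hS : S.Finite) :
    ∑ i, (mseGlueTrace s t hst S i).ncard ≤ S.ncard := by
  have hinj i := Sym2.map.injective (mseGlueEmb_injective (hst := hst) i)
  have hdisj : Pairwise (Function.onFun Disjoint
      fun i => Sym2.map (mseGlueEmb s t hst i) '' mseGlueTrace s t hst S i) := by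
    intro i j hij
    refine Set.disjoint_left.2 ?_
    rintro _ ⟨f, hf, rfl⟩ ⟨g, -, hg⟩
    exact hij (eq_of_sym2_map_mseGlueEmb_eq hf.1 hg.symm)
  calc ∑ i, (mseGlueTrace s t hst S i).ncard
      = ∑ i, (Sym2.map (mseGlueEmb s t hst i) '' mseGlueTrace s t hst S i).ncard := by
        simp only [Set.ncard_image_of_injective _ (hinj _)]
    _ = (⋃ i, Sym2.map (mseGlueEmb s t hst i) '' mseGlueTrace s t hst S i).ncard := by
        rw [Set.ncard_iUnion_of_finite (fun i => (mseGlueTrace_finite hS i).image _) hdisj,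
          finsum_eq_sum_of_fintype]
    _ ≤ S.ncard := Set.ncard_le_ncard (Set.iUnion_subset fun i =>
        Set.image_subset_iff.2 fun _ hf => hf.2) hS

theorem sym2_map_mseGlueEmb_mem_of_mem_mapCollapse (i : Fin ℓ) {x y : MseGlueV V s}
    (Q : (mseGlueGraph Gs s t hst).Walk x y) {f : Sym2 (V i)}
    (hf : f ∈ (Q.mapCollapse (mseGlueProj s t i)
      (mseGlueProj_eq_or_adj i)).edges) :
    Sym2.map (mseGlueEmb s t hst i) f ∈ Q.edges := by
  obtain ⟨e, he, rfl⟩ := List.mem_map.1 (Walk.edges_mapCollapse_subset _ _ Q hf)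
  have hdiag := (Gs i).not_isDiag_of_mem_edgeSet (Walk.edges_subset_edgeSet _ hf)
  induction e using Sym2.ind with
  | _ a b =>
    rcases mseGlueProj_adj i (Q.adj_of_mem_edges he) with hab | ⟨-, ha, hb⟩
    · exact absurd (by simp [hab]) hdiag
    · rwa [Sym2.map_mk, Sym2.map_mk, ha, hb]

theorem mseGlue_exists_routing_subset_trace (hl : 1 ≤ ℓ) {p : ℕ}
    (Q : Fin p → (mseGlueGraph Gs s t hst).Walk (mseGlueSrc hl s t hst) (mseGlueSnk hl s t hst))
    (i : Fin ℓ) :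
    ∃ P : Fin p → (Gs i).Walk (s i) (t i),
      (∀ j, (P j).IsPath) ∧ mseSharedEdges P ⊆ mseGlueTrace s t hst (mseSharedEdges Q) i := by
  classical
  let R j := ((Q j).mapCollapse (mseGlueProj s t i) (mseGlueProj_eq_or_adj i)).copy
    (mseGlueProj_src hl i) (mseGlueProj_snk hl i)
  refine ⟨fun j => (R j).bypass, fun j => Walk.bypass_isPath _, ?_⟩
  rintro f ⟨a, b, hab, hfa, hfb⟩
  replace hfa := Walk.edges_bypass_subset_edges _ hfa
  replace hfb := Walk.edges_bypass_subset_edges _ hfb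
  simp only [R, Walk.edges_copy] at hfa hfb
  exact ⟨(Gs i).not_isDiag_of_mem_edgeSet (Walk.edges_subset_edgeSet _ hfa), a, b, hab,
    sym2_map_mseGlueEmb_mem_of_mem_mapCollapse i _ hfa,
    sym2_map_mseGlueEmb_mem_of_mem_mapCollapse i _ hfb⟩

end GlueTrace

theorem stmt_11_general {ℓ : ℕ} (hl : 1 ≤ ℓ) {V : Fin ℓ → Type}
    (Gs : ∀ i, SimpleGraph (V i)) (s t : ∀ i, V i) (hst : ∀ i, s i ≠ t i)
    (p k : ℕ)
    (hall : ∀ i, ∃ P : Fin p → (Gs i).Walk (s i) (t i),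
      (∀ j, (P j).IsPath) ∧ (mseSharedEdges P).ncard ≤ k + 1) :
    (∃ P : Fin p →
        (mseGlueGraph Gs s t hst).Walk (mseGlueSrc hl s t hst) (mseGlueSnk hl s t hst),
      (∀ j, (P j).IsPath) ∧ (mseSharedEdges P).ncard ≤ ℓ * (k + 1) - 1) ↔
    (∃ i, ∃ P : Fin p → (Gs i).Walk (s i) (t i),
      (∀ j, (P j).IsPath) ∧ (mseSharedEdges P).ncard ≤ k) := by
  constructor
  · rintro ⟨Q, -, hQ⟩
    obtain ⟨i, -, hi⟩ : ∃ i ∈ Finset.univ,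
        (mseGlueTrace s t hst (mseSharedEdges Q) i).ncard < k + 1 := by
      refine Finset.exists_lt_of_sum_lt ((sum_ncard_mseGlueTrace_le
        (mseSharedEdges_finite Q)).trans_lt ?_)
      simp only [Finset.sum_const, Finset.card_univ, Fintype.card_fin, smul_eq_mul]
      have : 0 < ℓ * (k + 1) := Nat.mul_pos hl k.succ_pos
      omega
    obtain ⟨P, hPpath, hPsub⟩ := mseGlue_exists_routing_subset_trace hl Q i
    exact ⟨i, P, hPpath, (Set.ncard_le_ncard hPsub
      (mseGlueTrace_finite (mseSharedEdges_finite Q) i)).trans (by omega)⟩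
  · rintro ⟨i₀, P₀, -, hP₀⟩
    choose P hP using hall
    obtain ⟨Q, hQpath, hQ⟩ :=
      mseGlue_exists_routing_ncard_le_sum (hst := hst) hl (Function.update P i₀ P₀)
    have hle i : (mseSharedEdges (Function.update P i₀ P₀ i)).ncard ≤ k + 1 := by
      rcases eq_or_ne i i₀ with rfl | hi
      · rw [Function.update_self]
        omega
      · rw [Function.update_of_ne hi]
        exact (hP i).2
    have hsum :
        ∑ i, (mseSharedEdges (Function.update P i₀ P₀ i)).ncard < ∑ _i : Fin ℓ, (k + 1) :=
      Finset.sum_lt_sum (fun i _ => hle i)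
        ⟨i₀, Finset.mem_univ _, by rw [Function.update_self]; omega⟩
    simp only [Finset.sum_const, Finset.card_univ, Fintype.card_fin, smul_eq_mul] at hsum
    exact ⟨Q, hQpath, by omega⟩

theorem stmt_11 {ℓ : ℕ} (hl : 1 ≤ ℓ) {V : Fin ℓ → Type} [∀ i, Fintype (V i)]
    (Gs : ∀ i, SimpleGraph (V i)) (s t : ∀ i, V i) (hst : ∀ i, s i ≠ t i)
    (p k : ℕ) (hp : 1 ≤ p)
    (hall : ∀ i, ∃ P : Fin p → (Gs i).Walk (s i) (t i),
      (∀ j, (P j).IsPath) ∧ (mseSharedEdges P).ncard ≤ k + 1) :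
    (∃ P : Fin p →
        (mseGlueGraph Gs s t hst).Walk (mseGlueSrc hl s t hst) (mseGlueSnk hl s t hst),
      (∀ j, (P j).IsPath) ∧ (mseSharedEdges P).ncard ≤ ℓ * (k + 1) - 1) ↔
    (∃ i, ∃ P : Fin p → (Gs i).Walk (s i) (t i),
      (∀ j, (P j).IsPath) ∧ (mseSharedEdges P).ncard ≤ k) :=
  stmt_11_general hl Gs s t hst p k hall
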